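/- arXiv:0711.4225 — 7 statements merged into one kernel-verified Lean document; each statement's English description precedes it below -/
import Mathlib

section
/- For a regular consumption process X with relative rates Z (Z_k = X_k/A_k where A_k > 0), one has ∏_{i=0}^{k}(1 - Z_i) = 1 - Σ_{i=0}^{k} X_i/S_i for all k ∈ ℕ. -/
open MeasureTheory Finset

/-! The discounted account `A_k / S_k` drops by exactly `X_k / S_k` at each step, which
telescopes to `1 - ∑ X_i / S_i`; writing `X_k = Z_k A_k`, the same step multiplies it by
`1 - Z_k`, so it is also `∏ (1 - Z_i)`. -/

section DiscountedAccount

variable {K : Type*} [Field K] {s a x : ℕ → K}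

theorem discounted_account_succ (hs : ∀ n, s n ≠ 0)
    (ha : ∀ n, a (n + 1) = (a n - x n) * s (n + 1) / s n) (n : ℕ) :
    a (n + 1) / s (n + 1) = a n / s n - x n / s n := by
  rw [ha n]
  field_simp [hs n, hs (n + 1)]

theorem discounted_account_eq_one_sub_sum (hs : ∀ n, s n ≠ 0) (ha₀ : a 0 = s 0)
    (ha : ∀ n, a (n + 1) = (a n - x n) * s (n + 1) / s n) (n : ℕ) :
    a n / s n = 1 - ∑ i ∈ range n, x i / s i := by
  induction n with
  | zero => simp [ha₀, hs 0]
  | succ n ih => rw [discounted_account_succ hs ha, ih, sum_range_succ]; ring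

theorem discounted_account_eq_prod {z : ℕ → K} (hs : ∀ n, s n ≠ 0) (ha₀ : a 0 = s 0)
    (ha : ∀ n, a (n + 1) = (a n - x n) * s (n + 1) / s n) (hx : ∀ n, x n = z n * a n)
    (n : ℕ) : a n / s n = ∏ i ∈ range n, (1 - z i) := by
  induction n with
  | zero => simp [ha₀, hs 0]
  | succ n ih => rw [discounted_account_succ hs ha, prod_range_succ, ← ih, hx n]; ring

end DiscountedAccount

theorem product_sum_identity_general
    {Ω : Type*}
    (S A : ℝ → Ω → ℝ) (X : ℕ → Ω → ℝ) (Z : ℕ → Ω → ℝ)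
    (hSpos : ∀ t ω, 0 < S t ω)
    (hA0 : ∀ ω, A 0 ω = S 0 ω)
    (hArec : ∀ (k : ℕ) (t : ℝ), (k : ℝ) < t → t ≤ (k : ℝ) + 1 → ∀ ω,
      A t ω = (A (k : ℝ) ω - X k ω) * S t ω / S (k : ℝ) ω)
    (hX : ∀ (k : ℕ) (ω : Ω), X k ω = Z k ω * A (k : ℝ) ω) :
    ∀ (k : ℕ) (ω : Ω),
      ∏ i ∈ range (k + 1), (1 - Z i ω) =
        1 - ∑ i ∈ range (k + 1), X i ω / S (i : ℝ) ω := by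
  intro k ω
  have hs : ∀ n : ℕ, S n ω ≠ 0 := fun n => (hSpos _ ω).ne'
  have ha₀ : A ((0 : ℕ) : ℝ) ω = S ((0 : ℕ) : ℝ) ω := by simpa using hA0 ω
  have ha : ∀ n : ℕ, A ((n + 1 : ℕ) : ℝ) ω = (A n ω - X n ω) * S ((n + 1 : ℕ) : ℝ) ω / S n ω :=
    fun n => by
      rw [Nat.cast_succ]
      exact hArec n (n + 1) (lt_add_one _) le_rfl ω
  exact (discounted_account_eq_prod hs ha₀ ha (hX · ω) _).symm.trans
    (discounted_account_eq_one_sub_sum (a := fun n : ℕ => A n ω) (x := (X · ω)) hs ha₀ ha _)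

/-- for a regular consumption process with relative rates `Z`
(`X_k = Z_k·A_k`), one has `∏_{i=0}^k (1-Z_i) = 1 - ∑_{i=0}^k X_i/S_i`. -/
theorem product_sum_identity
    {Ω : Type*} {m : MeasurableSpace Ω} (ℱ : Filtration ℝ m)
    (S A : ℝ → Ω → ℝ) (X : ℕ → Ω → ℝ) (Z : ℕ → Ω → ℝ)
    (hSadapted : Adapted ℱ S)
    (hSpos : ∀ t ω, 0 < S t ω)
    (hA0 : ∀ ω, A 0 ω = S 0 ω)
    (hArec : ∀ (k : ℕ) (t : ℝ), (k : ℝ) < t → t ≤ (k : ℝ) + 1 → ∀ ω,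
      A t ω = (A (k : ℝ) ω - X k ω) * S t ω / S (k : ℝ) ω)
    (hreg : ∀ (k : ℕ) (ω : Ω), 0 ≤ X k ω ∧ X k ω ≤ A (k : ℝ) ω)
    (hX : ∀ (k : ℕ) (ω : Ω), X k ω = Z k ω * A (k : ℝ) ω) :
    ∀ (k : ℕ) (ω : Ω),
      ∏ i ∈ range (k + 1), (1 - Z i ω) =
        1 - ∑ i ∈ range (k + 1), X i ω / S (i : ℝ) ω :=
  product_sum_identity_general S A X Z hSpos hA0 hArec hX
end

section
/- Let ψ_0,...,ψ_{K-1} be operators from L^0(F_{k+1}) to L^0(F_k) mapping nonnegative to nonnegative and nonpositive to nonpositive random variables, satisfying ψ_k(Y·X) = Y·ψ_k(X) for F_{k+1}-measurable X and nonnegative F_k-measurable Y, and let ψ_K be an F_K-measurable random variable with 0 ≤ ψ_K ≤ 1. Then an adapted process (X_k)_{k=0,...,K} that is nonnegative, satisfies X_k = ψ_k(X_{k+1}) for k < K, and X_K = ψ_K·A_K, must be regular, i.e. 0 ≤ X_k ≤ A_k for all k. -/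
open MeasureTheory Finset

/-- a nonnegative adapted process with the PHPP `ψ` (projection property
`X_k = ψ_k(X_{k+1})` for `k < K` and `X_K = ψ_K · A_K`) is regular: `0 ≤ X_k ≤ A_k`. -/
theorem PHPP_implies_regular
    {Ω : Type*} {m : MeasurableSpace Ω} (K : ℕ) (ℱ : Filtration ℕ m)
    (S A : ℕ → Ω → ℝ) (X : ℕ → Ω → ℝ)
    (hSadapted : ∀ k : ℕ, Measurable[ℱ k] (S k))
    (hSpos : ∀ k ω, 0 < S k ω)
    (ψ : ℕ → (Ω → ℝ) → (Ω → ℝ)) (ψK : Ω → ℝ)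
    -- ψ_k maps F_{k+1}-measurable variables to F_k-measurable ones
    (hψmeas : ∀ k < K, ∀ f : Ω → ℝ, Measurable[ℱ (k + 1)] f → Measurable[ℱ k] (ψ k f))
    -- sign preservation
    (hψpos : ∀ k < K, ∀ f : Ω → ℝ, (∀ ω, 0 ≤ f ω) → ∀ ω, 0 ≤ ψ k f ω)
    (hψneg : ∀ k < K, ∀ f : Ω → ℝ, (∀ ω, f ω ≤ 0) → ∀ ω, ψ k f ω ≤ 0)
    -- positive homogeneity: ψ_k(Y·X) = Y·ψ_k(X) for nonnegative F_k-measurable Y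
    (hψhom : ∀ k < K, ∀ f g : Ω → ℝ, Measurable[ℱ (k + 1)] f → Measurable[ℱ k] g →
      (∀ ω, 0 ≤ g ω) → ψ k (fun ω => g ω * f ω) = fun ω => g ω * ψ k f ω)
    -- final fraction
    (hψKmeas : Measurable[ℱ K] ψK) (hψK01 : ∀ ω, 0 ≤ ψK ω ∧ ψK ω ≤ 1)
    -- X adapted, nonnegative, with the PHPP
    (hXadapted : ∀ k : ℕ, Measurable[ℱ k] (X k))
    (hXnonneg : ∀ k ≤ K, ∀ ω, 0 ≤ X k ω)
    (hA0 : ∀ ω, A 0 ω = S 0 ω)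
    (hArec : ∀ k < K, ∀ ω, A (k + 1) ω = (A k ω - X k ω) * S (k + 1) ω / S k ω)
    (hproj : ∀ k < K, X k = ψ k (X (k + 1)))
    (hfinal : ∀ ω, X K ω = ψK ω * A K ω) :
    ∀ k ≤ K, ∀ ω, 0 ≤ X k ω ∧ X k ω ≤ A k ω := by

  -- A is adapted
  have hAmeas : ∀ k, k ≤ K → Measurable[ℱ k] (A k) := by
    intro k
    induction k with
    | zero =>
      intro _
      have hA : A 0 = S 0 := funext hA0
      rw [hA]; exact hSadapted 0
    | succ n ih =>
      intro hn
      have hnK : n < K := hn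
      have hAe : A (n + 1) = fun ω => (A n ω - X n ω) * S (n + 1) ω / S n ω :=
        funext (hArec n hnK)
      rw [hAe]
      have hAn : Measurable[ℱ (n + 1)] (A n) :=
        (ih (le_of_lt hnK)).mono (ℱ.mono n.le_succ) le_rfl
      have hXn : Measurable[ℱ (n + 1)] (X n) :=
        (hXadapted n).mono (ℱ.mono n.le_succ) le_rfl
      have hSn : Measurable[ℱ (n + 1)] (S n) :=
        (hSadapted n).mono (ℱ.mono n.le_succ) le_rfl
      exact ((hAn.sub hXn).mul (hSadapted (n + 1))).div hSn
  -- key lemma: if A k ≥ 0 then X k ≤ A k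
  have key : ∀ k, k ≤ K → (∀ ω, 0 ≤ A k ω) → ∀ ω, X k ω ≤ A k ω := by
    intro k hk hA ω
    by_contra hcon
    push_neg at hcon
    rcases eq_or_lt_of_le hk with hkK | hkK
    · subst hkK
      have h1 : ψK ω * A k ω ≤ 1 * A k ω :=
        mul_le_mul_of_nonneg_right (hψK01 ω).2 (hA ω)
      rw [one_mul] at h1
      rw [hfinal ω] at hcon
      linarith
    · set g : Ω → ℝ := fun ω' => if A k ω' < X k ω' then (1 : ℝ) else 0 with hgdef
      have hgmeas : Measurable[ℱ k] g :=
        Measurable.ite (measurableSet_lt (hAmeas k hk) (hXadapted k))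
          measurable_const measurable_const
      have hgnn : ∀ ω', 0 ≤ g ω' := by
        intro ω'; by_cases h : A k ω' < X k ω' <;> simp [hgdef, h]
      -- Claim 1: A j < 0 where A k < X k, for k < j ≤ K
      have claim1 : ∀ j, k < j → j ≤ K → ∀ ω', A k ω' < X k ω' → A j ω' < 0 := by
        intro j
        induction j with
        | zero => omega
        | succ n ih =>
          intro h hn ω' hω'
          have hnK : n < K := hn
          rw [hArec n hnK ω']
          have hAX : A n ω' - X n ω' < 0 := by
            rcases Nat.lt_succ_iff_lt_or_eq.mp h with h' | h'
            · have h1 := ih h' (le_of_lt hnK) ω' hω'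
              have h2 := hXnonneg n (le_of_lt hnK) ω'
              linarith
            · subst h'
              linarith
          exact div_neg_of_neg_of_pos
            (mul_neg_of_neg_of_pos hAX (hSpos (n + 1) ω')) (hSpos n ω')
      -- Claim 2: X K = 0 where A k < X k
      have claim2 : ∀ ω', A k ω' < X k ω' → X K ω' = 0 := by
        intro ω' hω'
        have h1 : X K ω' ≤ 0 := by
          rw [hfinal ω']
          exact mul_nonpos_of_nonneg_of_nonpos (hψK01 ω').1
            (le_of_lt (claim1 K hkK le_rfl ω' hω'))
        exact le_antisymm h1 (hXnonneg K le_rfl ω')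
      -- Claim 3: going backwards, X (K - n) = 0 where A k < X k
      have claim3 : ∀ n, n ≤ K - k → ∀ ω', A k ω' < X k ω' → X (K - n) ω' = 0 := by
        intro n
        induction n with
        | zero =>
          intro _ ω' hω'
          simpa using claim2 ω' hω'
        | succ m ih =>
          intro hm ω' hω'
          have hmK : m ≤ K - k := le_of_lt (Nat.lt_of_succ_le hm)
          have hjk : k ≤ K - (m + 1) := by omega
          have hjK : K - (m + 1) < K := by omega
          have hsucc : K - (m + 1) + 1 = K - m := by omega
          have hzero : (fun ω'' => g ω'' * X (K - (m + 1) + 1) ω'') = (fun _ => (0 : ℝ)) := by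
            funext ω''
            by_cases h : A k ω'' < X k ω''
            · have h0 : X (K - m) ω'' = 0 := ih hmK ω'' h
              rw [hsucc, h0, mul_zero]
            · simp [hgdef, h]
          have hψ0 : ψ (K - (m + 1)) (fun _ => (0 : ℝ)) = (fun _ => (0 : ℝ)) := by
            funext ω''
            exact le_antisymm (hψneg _ hjK _ (fun _ => le_rfl) ω'')
              (hψpos _ hjK _ (fun _ => le_rfl) ω'')
          have hhom := hψhom (K - (m + 1)) hjK (X (K - (m + 1) + 1)) g
            (hXadapted _) (hgmeas.mono (ℱ.mono hjk) le_rfl) hgnn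
          have hall : (fun ω'' => g ω'' * ψ (K - (m + 1)) (X (K - (m + 1) + 1)) ω'')
              = (fun _ => (0 : ℝ)) := by
            rw [← hhom, hzero, hψ0]
          have hpt := congrFun hall ω'
          have hg1 : g ω' = 1 := by simp [hgdef, hω']
          rw [hg1, one_mul] at hpt
          rw [hproj (K - (m + 1)) hjK]
          exact hpt
      have hfin := claim3 (K - k) le_rfl ω hcon
      have hkk : K - (K - k) = k := by omega
      rw [hkk] at hfin
      rw [hfin] at hcon
      exact absurd (hA ω) (not_le.mpr hcon)
  -- main forward induction
  have main : ∀ k, k ≤ K → (∀ ω, 0 ≤ A k ω) ∧ (∀ ω, X k ω ≤ A k ω) := by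
    intro k
    induction k with
    | zero =>
      intro h
      have hA : ∀ ω, 0 ≤ A 0 ω := by
        intro ω; rw [hA0]; exact le_of_lt (hSpos 0 ω)
      exact ⟨hA, key 0 h hA⟩
    | succ n ih =>
      intro h
      have hn : n < K := h
      obtain ⟨hA, hX⟩ := ih (le_of_lt hn)
      have hA' : ∀ ω, 0 ≤ A (n + 1) ω := by
        intro ω
        rw [hArec n hn ω]
        have h1 := hX ω
        exact div_nonneg (mul_nonneg (by linarith) (le_of_lt (hSpos (n + 1) ω)))
          (le_of_lt (hSpos n ω))
      exact ⟨hA', key (n + 1) h hA'⟩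
  intro k hk ω
  exact ⟨hXnonneg k hk ω, (main k hk).2 ω⟩
end

section
/- Under a PHPP ψ (as in Theorem 1), if X is nonnegative, regular, and satisfies X_k = ψ_k(X_{k+1}) for k < K and X_K = ψ_K·A_K, then A_t > 0 for all 0 ≤ t ≤ K, and Z_k := X_k/A_k < 1 for k = 0,...,K-1. -/
/-!
Positivity of the account propagates along the recursion `A_t = (A_k - X_k) S_t / S_k`
as long as consumption stays strictly below the account, `X_k < A_k`. That strict inequality
comes from the homogeneity of `ψ_k`: on the `ℱ_k`-measurable event `{A_k ≤ X_k}` the account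
is exhausted, so `A_{k+1} = 0` and regularity forces `X_{k+1} = 0` there; multiplying by the
indicator of the complementary event and pulling it through `ψ_k` shows that
`X_k = ψ_k(X_{k+1})` vanishes on that event too, which is impossible while `A_k > 0`.
-/

open MeasureTheory

section

variable {Ω : Type*}

theorem apply_eq_zero_of_eq_zero_on_of_homogeneous {m : MeasurableSpace Ω}
    (φ : (Ω → ℝ) → Ω → ℝ) {f : Ω → ℝ}
    (hφ : ∀ g : Ω → ℝ, Measurable[m] g → (∀ ω, 0 ≤ g ω) →
      φ (fun ω => g ω * f ω) = fun ω => g ω * φ f ω)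
    {B : Set Ω} (hB : MeasurableSet[m] B) (hf : ∀ ω ∈ B, f ω = 0) :
    ∀ ω ∈ B, φ f ω = 0 := by
  intro ω hω
  set g : Ω → ℝ := Bᶜ.indicator 1
  have hgf : (fun ω => g ω * f ω) = f := by
    funext ω
    by_cases h : ω ∈ B
    · simp [g, hf ω h]
    · simp [g, h]
  have hφf := congrFun (hφ g (measurable_one.indicator hB.compl)
    (Set.indicator_nonneg fun _ _ => zero_le_one)) ω
  rw [hgf] at hφf
  simpa [g, hω] using hφf

theorem lt_of_projection_of_exhausted_eq_zero {m : MeasurableSpace Ω}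
    (φ : (Ω → ℝ) → Ω → ℝ) {a x a' x' : Ω → ℝ}
    (ha : Measurable[m] a) (hx : Measurable[m] x) (ha_pos : ∀ ω, 0 < a ω)
    (hxa : ∀ ω, x ω ≤ a ω) (hx'_nonneg : ∀ ω, 0 ≤ x' ω) (hx'a' : ∀ ω, x' ω ≤ a' ω)
    (ha' : ∀ ω, x ω = a ω → a' ω = 0) (hxφ : x = φ x')
    (hφ : ∀ g : Ω → ℝ, Measurable[m] g → (∀ ω, 0 ≤ g ω) →
      φ (fun ω => g ω * x' ω) = fun ω => g ω * φ x' ω) :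
    ∀ ω, x ω < a ω := by
  have hx'_zero : ∀ ω ∈ {ω | a ω ≤ x ω}, x' ω = 0 := fun ω hω =>
    le_antisymm ((hx'a' ω).trans_eq (ha' ω (le_antisymm (hxa ω) hω))) (hx'_nonneg ω)
  have hx_zero := apply_eq_zero_of_eq_zero_on_of_homogeneous φ hφ
    (measurableSet_le ha hx) hx'_zero
  intro ω
  by_contra! hω
  have := hx_zero ω hω
  rw [← hxφ] at this
  linarith [ha_pos ω]

section Account

variable {m : MeasurableSpace Ω} {K : ℕ} {S A : ℝ → Ω → ℝ} {X : ℕ → Ω → ℝ}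

theorem account_pos_of_lt
    (hSpos : ∀ t ω, 0 < S t ω)
    (hArec : ∀ k < K, ∀ (t : ℝ), (k : ℝ) < t → t ≤ (k : ℝ) + 1 → ∀ ω,
      A t ω = (A (k : ℝ) ω - X k ω) * S t ω / S (k : ℝ) ω)
    {k : ℕ} (hk : k < K) {t : ℝ} (hkt : (k : ℝ) < t) (htk : t ≤ (k : ℝ) + 1) {ω : Ω}
    (hXA : X k ω < A (k : ℝ) ω) :
    0 < A t ω := by
  rw [hArec k hk t hkt htk ω]
  exact div_pos (mul_pos (sub_pos.2 hXA) (hSpos t ω)) (hSpos _ ω)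

theorem account_measurable_pos_of_lt {ℱ : Filtration ℝ m}
    (hSadapted : Adapted ℱ S) (hSpos : ∀ t ω, 0 < S t ω)
    (hXadapted : ∀ k : ℕ, Measurable[ℱ (k : ℝ)] (X k))
    (hA0 : ∀ ω, A 0 ω = S 0 ω)
    (hArec : ∀ k < K, ∀ (t : ℝ), (k : ℝ) < t → t ≤ (k : ℝ) + 1 → ∀ ω,
      A t ω = (A (k : ℝ) ω - X k ω) * S t ω / S (k : ℝ) ω)
    (hlt : ∀ k < K, Measurable[ℱ (k : ℝ)] (A (k : ℝ)) → (∀ ω, 0 < A (k : ℝ) ω) →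
      ∀ ω, X k ω < A (k : ℝ) ω) :
    ∀ k ≤ K, Measurable[ℱ (k : ℝ)] (A (k : ℝ)) ∧ ∀ ω, 0 < A (k : ℝ) ω := by
  intro k
  induction k with
  | zero =>
    intro _
    rw [Nat.cast_zero, funext hA0]
    exact ⟨hSadapted 0, hSpos 0⟩
  | succ k ih =>
    intro hk
    obtain ⟨hA_meas, hA_pos⟩ := ih (Nat.le_of_succ_le hk)
    have hXA := hlt k hk hA_meas hA_pos
    have hA : A ((k + 1 : ℕ) : ℝ) = fun ω => (A k ω - X k ω) * S (k + 1) ω / S k ω := by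
      funext ω
      exact_mod_cast hArec k hk (k + 1) (by linarith) le_rfl ω
    have hmono : ℱ (k : ℝ) ≤ ℱ ((k + 1 : ℕ) : ℝ) := ℱ.mono (by simp)
    refine ⟨?_, fun ω => account_pos_of_lt hSpos hArec hk (by simp) (by simp) (hXA ω)⟩
    rw [hA]
    exact (((hA_meas.mono hmono le_rfl).sub ((hXadapted k).mono hmono le_rfl)).mul
      (by exact_mod_cast hSadapted ((k + 1 : ℕ) : ℝ))).div
      ((hSadapted (k : ℝ)).mono hmono le_rfl)

theorem account_pos_of_forall_lt
    (hSpos : ∀ t ω, 0 < S t ω)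
    (hA0 : ∀ ω, A 0 ω = S 0 ω)
    (hArec : ∀ k < K, ∀ (t : ℝ), (k : ℝ) < t → t ≤ (k : ℝ) + 1 → ∀ ω,
      A t ω = (A (k : ℝ) ω - X k ω) * S t ω / S (k : ℝ) ω)
    (hXA : ∀ k < K, ∀ ω, X k ω < A (k : ℝ) ω) :
    ∀ t : ℝ, 0 ≤ t → t ≤ (K : ℝ) → ∀ ω, 0 < A t ω := by
  intro t ht0 htK ω
  rcases ht0.eq_or_lt with rfl | ht0
  · exact hA0 ω ▸ hSpos 0 ω
  -- `t` lies in `(k, k + 1]` for `k = ⌈t⌉₊ - 1`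
  have hceil : 1 ≤ ⌈t⌉₊ := Nat.one_le_ceil_iff.2 ht0
  have hk : ((⌈t⌉₊ - 1 : ℕ) : ℝ) + 1 = ⌈t⌉₊ := by
    rw [Nat.cast_sub hceil]; ring
  have hkK : ⌈t⌉₊ - 1 < K := by have := Nat.ceil_le.2 htK; omega
  refine account_pos_of_lt hSpos hArec hkK ?_ (hk ▸ Nat.le_ceil t) (hXA _ hkK ω)
  linarith [Nat.ceil_lt_add_one ht0.le]

end Account

end

theorem PHPP_account_positive_general
    {Ω : Type*} {m : MeasurableSpace Ω} (K : ℕ) (ℱ : Filtration ℝ m)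
    (S A : ℝ → Ω → ℝ) (X : ℕ → Ω → ℝ)
    (hSadapted : Adapted ℱ S)
    (hSpos : ∀ t ω, 0 < S t ω)
    (ψ : ℕ → (Ω → ℝ) → (Ω → ℝ))
    (hψhom : ∀ k < K, ∀ f g : Ω → ℝ,
      Measurable[ℱ ((k : ℝ) + 1)] f → Measurable[ℱ (k : ℝ)] g →
      (∀ ω, 0 ≤ g ω) → ψ k (fun ω => g ω * f ω) = fun ω => g ω * ψ k f ω)
    (hXadapted : ∀ k : ℕ, Measurable[ℱ (k : ℝ)] (X k))
    (hXnonneg : ∀ k ≤ K, ∀ ω, 0 ≤ X k ω)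
    (hXregular : ∀ k ≤ K, ∀ ω, X k ω ≤ A (k : ℝ) ω)
    (hA0 : ∀ ω, A 0 ω = S 0 ω)
    (hArec : ∀ k < K, ∀ (t : ℝ), (k : ℝ) < t → t ≤ (k : ℝ) + 1 → ∀ ω,
      A t ω = (A (k : ℝ) ω - X k ω) * S t ω / S (k : ℝ) ω)
    (hproj : ∀ k < K, X k = ψ k (X (k + 1))) :
    (∀ t : ℝ, 0 ≤ t → t ≤ (K : ℝ) → ∀ ω, 0 < A t ω) ∧
    (∀ k < K, ∀ ω, X k ω / A (k : ℝ) ω < 1) := by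
  have hlt : ∀ k < K, Measurable[ℱ (k : ℝ)] (A (k : ℝ)) → (∀ ω, 0 < A (k : ℝ) ω) →
      ∀ ω, X k ω < A (k : ℝ) ω := fun k hk hA_meas hA_pos =>
    lt_of_projection_of_exhausted_eq_zero (ψ k) hA_meas (hXadapted k) hA_pos
      (hXregular k hk.le) (hXnonneg (k + 1) hk) (by exact_mod_cast hXregular (k + 1) hk)
      (fun ω h => by
        rw [Nat.cast_succ, hArec k hk _ (by linarith) le_rfl ω, h, sub_self, zero_mul, zero_div])
      (hproj k hk)
      (fun g hg hg_nonneg => hψhom k hk _ g (Nat.cast_succ (R := ℝ) k ▸ hXadapted (k + 1)) hg hg_nonneg)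
  have hA := account_measurable_pos_of_lt hSadapted hSpos hXadapted hA0 hArec hlt
  have hXA : ∀ k < K, ∀ ω, X k ω < A (k : ℝ) ω :=
    fun k hk => hlt k hk (hA k hk.le).1 (hA k hk.le).2
  exact ⟨account_pos_of_forall_lt hSpos hA0 hArec hXA,
    fun k hk ω => (div_lt_one ((hA k hk.le).2 ω)).2 (hXA k hk ω)⟩

/-- under a PHPP, a nonnegative regular consumption process keeps the
account strictly positive on `[0,K]`, and `Z_k = X_k/A_k < 1` for `k < K`. -/
theorem PHPP_account_positive
    {Ω : Type*} {m : MeasurableSpace Ω} (K : ℕ) (ℱ : Filtration ℝ m)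
    (S A : ℝ → Ω → ℝ) (X : ℕ → Ω → ℝ)
    (hSadapted : Adapted ℱ S)
    (hSpos : ∀ t ω, 0 < S t ω)
    (ψ : ℕ → (Ω → ℝ) → (Ω → ℝ)) (ψK : Ω → ℝ)
    (hψmeas : ∀ k < K, ∀ f : Ω → ℝ,
      Measurable[ℱ ((k : ℝ) + 1)] f → Measurable[ℱ (k : ℝ)] (ψ k f))
    (hψpos : ∀ k < K, ∀ f : Ω → ℝ, (∀ ω, 0 ≤ f ω) → ∀ ω, 0 ≤ ψ k f ω)
    (hψneg : ∀ k < K, ∀ f : Ω → ℝ, (∀ ω, f ω ≤ 0) → ∀ ω, ψ k f ω ≤ 0)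
    (hψhom : ∀ k < K, ∀ f g : Ω → ℝ,
      Measurable[ℱ ((k : ℝ) + 1)] f → Measurable[ℱ (k : ℝ)] g →
      (∀ ω, 0 ≤ g ω) → ψ k (fun ω => g ω * f ω) = fun ω => g ω * ψ k f ω)
    (hψKmeas : Measurable[ℱ (K : ℝ)] ψK) (hψK01 : ∀ ω, 0 ≤ ψK ω ∧ ψK ω ≤ 1)
    (hXadapted : ∀ k : ℕ, Measurable[ℱ (k : ℝ)] (X k))
    (hXnonneg : ∀ k ≤ K, ∀ ω, 0 ≤ X k ω)
    (hXregular : ∀ k ≤ K, ∀ ω, X k ω ≤ A (k : ℝ) ω)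
    (hA0 : ∀ ω, A 0 ω = S 0 ω)
    (hArec : ∀ k < K, ∀ (t : ℝ), (k : ℝ) < t → t ≤ (k : ℝ) + 1 → ∀ ω,
      A t ω = (A (k : ℝ) ω - X k ω) * S t ω / S (k : ℝ) ω)
    (hproj : ∀ k < K, X k = ψ k (X (k + 1)))
    (hfinal : ∀ ω, X K ω = ψK ω * A (K : ℝ) ω) :
    (∀ t : ℝ, 0 ≤ t → t ≤ (K : ℝ) → ∀ ω, 0 < A t ω) ∧
    (∀ k < K, ∀ ω, X k ω / A (k : ℝ) ω < 1) :=
  PHPP_account_positive_general K ℱ S A X hSadapted hSpos ψ hψhom hXadapted hXnonneg hXregular hA0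
    hArec hproj
end

section
/- Given a PHPP ψ and strictly positive S, define Z_K = ψ_K and, backwards, Z_{k-1} = ψ_{k-1}(Z_k·S_k) / (S_{k-1} + ψ_{k-1}(Z_k·S_k)) for k = K,...,1. Then the process X defined by X_k = Z_k·A_k satisfies X_k = ψ_k(X_{k+1}) for all k < K and X_K = ψ_K·A_K, is nonnegative, and is regular w.r.t. S. -/
open MeasureTheory

/-! Since `S > 0` and `ψ` preserves nonnegativity, the backward recursion keeps every `Z k` adapted
and in `[0, 1]`; hence the forward recursion keeps the account `A` adapted and nonnegative, and
`X = Z A` lies between `0` and `A`. The account after consumption, `(A k - X k) / S k`, is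
`ℱ k`-measurable and nonnegative, so it factors out of `ψ k`, and the choice of `Z k` is exactly
what makes `ψ k (X (k + 1)) = X k`. -/

lemma div_add_self_mem_Icc {s p : ℝ} (hs : 0 < s) (hp : 0 ≤ p) : p / (s + p) ∈ Set.Icc 0 1 :=
  ⟨div_nonneg hp (by linarith), div_le_one_of_le₀ (by linarith) (by linarith)⟩

lemma mul_one_sub_div_add_self_div_mul (a : ℝ) {s p : ℝ} (hs : 0 < s) (hp : 0 ≤ p) :
    a * (1 - p / (s + p)) / s * p = p / (s + p) * a := by
  have hsp : s + p ≠ 0 := by linarith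
  field_simp
  ring

section Recursions

variable {Ω : Type*} {m : MeasurableSpace Ω} {K : ℕ} {ℱ : Filtration ℕ m} {S Z A : ℕ → Ω → ℝ}

lemma adapted_mem_Icc_of_backward_recursion {ψ : ℕ → (Ω → ℝ) → (Ω → ℝ)}
    (hS : ∀ k, Measurable[ℱ k] (S k)) (hSpos : ∀ k ω, 0 < S k ω)
    (hψmeas : ∀ k < K, ∀ f : Ω → ℝ, Measurable[ℱ (k + 1)] f → Measurable[ℱ k] (ψ k f))
    (hψpos : ∀ k < K, ∀ f : Ω → ℝ, (∀ ω, 0 ≤ f ω) → ∀ ω, 0 ≤ ψ k f ω)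
    (hZK : Measurable[ℱ K] (Z K) ∧ ∀ ω, Z K ω ∈ Set.Icc 0 1)
    (hZrec : ∀ k < K, ∀ ω, Z k ω =
      ψ k (fun ω' => Z (k + 1) ω' * S (k + 1) ω') ω /
        (S k ω + ψ k (fun ω' => Z (k + 1) ω' * S (k + 1) ω') ω)) :
    ∀ k ≤ K, Measurable[ℱ k] (Z k) ∧ ∀ ω, Z k ω ∈ Set.Icc 0 1 := by
  intro k hk
  induction hk using Nat.decreasingInduction with
  | self => exact hZK
  | of_succ k hk ih =>
    obtain ⟨hZm, hZI⟩ := ih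
    set P := ψ k (fun ω' => Z (k + 1) ω' * S (k + 1) ω')
    have hPpos : ∀ ω, 0 ≤ P ω :=
      hψpos k hk _ fun ω => mul_nonneg (hZI ω).1 (hSpos (k + 1) ω).le
    have hZ : Z k = fun ω => P ω / (S k ω + P ω) := funext (hZrec k hk)
    have hPm : Measurable[ℱ k] P := hψmeas k hk _ (hZm.mul (hS (k + 1)))
    rw [hZ]
    exact ⟨hPm.div ((hS k).add hPm), fun ω => div_add_self_mem_Icc (hSpos k ω) (hPpos ω)⟩

lemma adapted_nonneg_of_forward_recursion
    (hS : ∀ k, Measurable[ℱ k] (S k)) (hSpos : ∀ k ω, 0 < S k ω)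
    (hZ : ∀ k ≤ K, Measurable[ℱ k] (Z k) ∧ ∀ ω, Z k ω ∈ Set.Icc 0 1)
    (hA0 : ∀ ω, A 0 ω = S 0 ω)
    (hArec : ∀ k < K, ∀ ω, A (k + 1) ω = A k ω * (1 - Z k ω) * S (k + 1) ω / S k ω) :
    ∀ k ≤ K, Measurable[ℱ k] (A k) ∧ ∀ ω, 0 ≤ A k ω := by
  intro k hk
  induction k with
  | zero =>
    rw [funext hA0]
    exact ⟨hS 0, fun ω => (hSpos 0 ω).le⟩
  | succ k ih =>
    obtain ⟨hAm, hApos⟩ := ih (by omega)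
    obtain ⟨hZm, hZI⟩ := hZ k (by omega)
    have hmono {f : Ω → ℝ} (hf : Measurable[ℱ k] f) : Measurable[ℱ (k + 1)] f :=
      hf.mono (ℱ.mono k.le_succ) le_rfl
    rw [funext (hArec k hk)]
    refine ⟨?_, fun ω => ?_⟩
    · exact (((hmono hAm).mul (measurable_const.sub (hmono hZm))).mul (hS (k + 1))).div
        (hmono (hS k))
    have hZ1 : 0 ≤ 1 - Z k ω := sub_nonneg.2 (hZI ω).2
    have := hApos ω
    have := hSpos k ω
    have := hSpos (k + 1) ω
    positivity

end Recursions

lemma map_consumption_succ_eq_consumption {Ω : Type*} {m₀ m₁ : MeasurableSpace Ω}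
    (φ : (Ω → ℝ) → Ω → ℝ)
    (hφ : ∀ f g : Ω → ℝ, Measurable[m₁] f → Measurable[m₀] g → (∀ ω, 0 ≤ g ω) →
      φ (fun ω => g ω * f ω) = fun ω => g ω * φ f ω)
    {s₀ s₁ z₀ z₁ a₀ a₁ : Ω → ℝ} (hs₀ : Measurable[m₀] s₀) (hs₀pos : ∀ ω, 0 < s₀ ω)
    (hs₁ : Measurable[m₁] s₁) (hz₀ : Measurable[m₀] z₀) (hz₀le : ∀ ω, z₀ ω ≤ 1)
    (hz₁ : Measurable[m₁] z₁) (ha₀ : Measurable[m₀] a₀) (ha₀pos : ∀ ω, 0 ≤ a₀ ω)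
    (hφpos : ∀ ω, 0 ≤ φ (fun ω' => z₁ ω' * s₁ ω') ω)
    (hz₀eq : ∀ ω, z₀ ω = φ (fun ω' => z₁ ω' * s₁ ω') ω /
      (s₀ ω + φ (fun ω' => z₁ ω' * s₁ ω') ω))
    (ha₁ : ∀ ω, a₁ ω = a₀ ω * (1 - z₀ ω) * s₁ ω / s₀ ω) :
    φ (fun ω => z₁ ω * a₁ ω) = fun ω => z₀ ω * a₀ ω := by
  set g : Ω → ℝ := fun ω => a₀ ω * (1 - z₀ ω) / s₀ ω
  have hg : Measurable[m₀] g := (ha₀.mul (measurable_const.sub hz₀)).div hs₀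
  have hgpos : ∀ ω, 0 ≤ g ω := fun ω =>
    div_nonneg (mul_nonneg (ha₀pos ω) (sub_nonneg.2 (hz₀le ω))) (hs₀pos ω).le
  have hfactor : (fun ω => z₁ ω * a₁ ω) = fun ω => g ω * (z₁ ω * s₁ ω) := by
    funext ω
    rw [ha₁]
    ring
  rw [hfactor, hφ (fun ω => z₁ ω * s₁ ω) g (hz₁.mul hs₁) hg hgpos]
  funext ω
  simp only [g, hz₀eq ω]
  exact mul_one_sub_div_add_self_div_mul _ (hs₀pos ω) (hφpos ω)

theorem PHPP_existence_general
    {Ω : Type*} {m : MeasurableSpace Ω} (K : ℕ) (ℱ : Filtration ℕ m)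
    (S A : ℕ → Ω → ℝ) (X Z : ℕ → Ω → ℝ)
    (hSadapted : ∀ k : ℕ, Measurable[ℱ k] (S k))
    (hSpos : ∀ k ω, 0 < S k ω)
    (ψ : ℕ → (Ω → ℝ) → (Ω → ℝ)) (ψK : Ω → ℝ)
    (hψmeas : ∀ k < K, ∀ f : Ω → ℝ, Measurable[ℱ (k + 1)] f → Measurable[ℱ k] (ψ k f))
    (hψpos : ∀ k < K, ∀ f : Ω → ℝ, (∀ ω, 0 ≤ f ω) → ∀ ω, 0 ≤ ψ k f ω)
    (hψhom : ∀ k < K, ∀ f g : Ω → ℝ, Measurable[ℱ (k + 1)] f → Measurable[ℱ k] g →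
      (∀ ω, 0 ≤ g ω) → ψ k (fun ω => g ω * f ω) = fun ω => g ω * ψ k f ω)
    (hψKmeas : Measurable[ℱ K] ψK) (hψK01 : ∀ ω, 0 ≤ ψK ω ∧ ψK ω ≤ 1)
    -- backward recursion for the relative rates
    (hZK : Z K = ψK)
    (hZrec : ∀ k < K, ∀ ω, Z k ω =
      ψ k (fun ω' => Z (k + 1) ω' * S (k + 1) ω') ω /
        (S k ω + ψ k (fun ω' => Z (k + 1) ω' * S (k + 1) ω') ω))
    -- the consumption process and the account
    (hX : ∀ k ≤ K, ∀ ω, X k ω = Z k ω * A k ω)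
    (hA0 : ∀ ω, A 0 ω = S 0 ω)
    (hArec : ∀ k < K, ∀ ω, A (k + 1) ω = (A k ω - X k ω) * S (k + 1) ω / S k ω) :
    (∀ k < K, X k = ψ k (X (k + 1))) ∧
    (∀ ω, X K ω = ψK ω * A K ω) ∧
    (∀ k ≤ K, ∀ ω, 0 ≤ X k ω ∧ X k ω ≤ A k ω) := by
  have hZ := adapted_mem_Icc_of_backward_recursion hSadapted hSpos hψmeas hψpos
    (hZK ▸ ⟨hψKmeas, hψK01⟩) hZrec
  have hArec' : ∀ k < K, ∀ ω, A (k + 1) ω = A k ω * (1 - Z k ω) * S (k + 1) ω / S k ω := by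
    intro k hk ω
    rw [hArec k hk, hX k hk.le]
    ring
  have hA := adapted_nonneg_of_forward_recursion hSadapted hSpos hZ hA0 hArec'
  refine ⟨fun k hk => ?_, fun ω => by rw [hX K le_rfl, hZK], fun k hk ω => ?_⟩
  · rw [funext (hX k hk.le), funext (hX (k + 1) hk)]
    exact (map_consumption_succ_eq_consumption (ψ k) (hψhom k hk) (hSadapted k) (hSpos k)
      (hSadapted (k + 1)) (hZ k hk.le).1 (fun ω => ((hZ k hk.le).2 ω).2) (hZ (k + 1) hk).1
      (hA k hk.le).1 (hA k hk.le).2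
      (hψpos k hk _ fun ω => mul_nonneg ((hZ (k + 1) hk).2 ω).1 (hSpos (k + 1) ω).le)
      (hZrec k hk) (hArec' k hk)).symm
  · rw [hX k hk]
    obtain ⟨hZ0, hZ1⟩ := (hZ k hk).2 ω
    exact ⟨mul_nonneg hZ0 ((hA k hk).2 ω), mul_le_of_le_one_left ((hA k hk).2 ω) hZ1⟩

/-- the backward recursion `Z_K = ψ_K`,
`Z_{k} = ψ_{k}(Z_{k+1} S_{k+1})/(S_{k} + ψ_{k}(Z_{k+1} S_{k+1}))` yields, via
`X_k = Z_k·A_k`, a nonnegative regular consumption process with the PHPP `ψ`. -/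
theorem PHPP_existence
    {Ω : Type*} {m : MeasurableSpace Ω} (K : ℕ) (ℱ : Filtration ℕ m)
    (S A : ℕ → Ω → ℝ) (X Z : ℕ → Ω → ℝ)
    (hSadapted : ∀ k : ℕ, Measurable[ℱ k] (S k))
    (hSpos : ∀ k ω, 0 < S k ω)
    (ψ : ℕ → (Ω → ℝ) → (Ω → ℝ)) (ψK : Ω → ℝ)
    (hψmeas : ∀ k < K, ∀ f : Ω → ℝ, Measurable[ℱ (k + 1)] f → Measurable[ℱ k] (ψ k f))
    (hψpos : ∀ k < K, ∀ f : Ω → ℝ, (∀ ω, 0 ≤ f ω) → ∀ ω, 0 ≤ ψ k f ω)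
    (hψneg : ∀ k < K, ∀ f : Ω → ℝ, (∀ ω, f ω ≤ 0) → ∀ ω, ψ k f ω ≤ 0)
    (hψhom : ∀ k < K, ∀ f g : Ω → ℝ, Measurable[ℱ (k + 1)] f → Measurable[ℱ k] g →
      (∀ ω, 0 ≤ g ω) → ψ k (fun ω => g ω * f ω) = fun ω => g ω * ψ k f ω)
    (hψKmeas : Measurable[ℱ K] ψK) (hψK01 : ∀ ω, 0 ≤ ψK ω ∧ ψK ω ≤ 1)
    -- backward recursion for the relative rates
    (hZK : Z K = ψK)
    (hZrec : ∀ k < K, ∀ ω, Z k ω =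
      ψ k (fun ω' => Z (k + 1) ω' * S (k + 1) ω') ω /
        (S k ω + ψ k (fun ω' => Z (k + 1) ω' * S (k + 1) ω') ω))
    -- the consumption process and the account
    (hX : ∀ k ≤ K, ∀ ω, X k ω = Z k ω * A k ω)
    (hA0 : ∀ ω, A 0 ω = S 0 ω)
    (hArec : ∀ k < K, ∀ ω, A (k + 1) ω = (A k ω - X k ω) * S (k + 1) ω / S k ω) :
    (∀ k < K, X k = ψ k (X (k + 1))) ∧
    (∀ ω, X K ω = ψK ω * A K ω) ∧
    (∀ k ≤ K, ∀ ω, 0 ≤ X k ω ∧ X k ω ≤ A k ω) :=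
  PHPP_existence_general K ℱ S A X Z hSadapted hSpos ψ ψK hψmeas hψpos hψhom hψKmeas hψK01 hZK hZrec
    hX hA0 hArec
end

section
/- Conversely, if a nonnegative adapted process X satisfies X_k = ψ_k(X_{k+1}) for k < K and X_K = ψ_K·A_K for a PHPP ψ, then X_k = Z_k·A_k where Z_K = ψ_K and Z_{k-1} = ψ_{k-1}(Z_k·S_k)/(S_{k-1} + ψ_{k-1}(Z_k·S_k)); i.e., the process with a given PHPP is unique. -/
/-!
Backward induction on `k`. If `X_{k+1} = Z_{k+1} A_{k+1}`, the account recursion gives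
`X_{k+1} = g · (Z_{k+1} S_{k+1})` with the `ℱ_k`-measurable factor `g = (A_k - X_k) / S_k`.
Since `X_{k+1} ≥ 0` and `Z_{k+1} S_{k+1} ≥ 0`, the factor may be replaced by `g⁺`, which
`ψ_k` pulls out: `X_k = g⁺ c` with `c = ψ_k(Z_{k+1} S_{k+1})`. Where `g ≥ 0` this is the linear
equation `X_k S_k = (A_k - X_k) c`, solved by `X_k = c / (S_k + c) · A_k = Z_k A_k`. Where `g < 0`,
`Z_{k+1} S_{k+1}` vanishes, so by locality of `ψ_k` also `c = 0`, and both sides vanish.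
-/

open MeasureTheory

def IsCondPosHomogeneous {Ω : Type*} (m₀ m₁ : MeasurableSpace Ω) (ψ : (Ω → ℝ) → Ω → ℝ) : Prop :=
  ∀ f g : Ω → ℝ, Measurable[m₁] f → Measurable[m₀] g → (∀ ω, 0 ≤ g ω) →
    ψ (fun ω => g ω * f ω) = fun ω => g ω * ψ f ω

lemma mul_eq_max_zero_mul_of_mul_nonneg {g u : ℝ} (hu : 0 ≤ u) (h : 0 ≤ g * u) :
    g * u = max g 0 * u := by
  rcases le_total 0 g with hg | hg
  · rw [max_eq_left hg]
  · rw [max_eq_right hg]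
    nlinarith [mul_nonpos_of_nonpos_of_nonneg hg hu]

lemma eq_div_add_mul_of_eq_max_zero_mul {a x s c : ℝ} (hs : 0 < s) (hc : 0 ≤ c)
    (hc_zero : (a - x) / s < 0 → c = 0) (hx : x = max ((a - x) / s) 0 * c) :
    x = c / (s + c) * a := by
  by_cases hg : (a - x) / s < 0
  · rw [hc_zero hg, mul_zero] at hx
    simp [hx, hc_zero hg]
  · rw [max_eq_left (not_lt.mp hg)] at hx
    field_simp at hx ⊢
    linarith

namespace IsCondPosHomogeneous

variable {Ω : Type*} {m₀ m₁ : MeasurableSpace Ω} {ψ : (Ω → ℝ) → Ω → ℝ}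

lemma apply_eq_zero_of_eqOn_zero (hψ : IsCondPosHomogeneous m₀ m₁ ψ) {u : Ω → ℝ}
    (hu : Measurable[m₁] u) {B : Set Ω} (hB : MeasurableSet[m₀] B) (hu_zero : Set.EqOn u 0 B) :
    Set.EqOn (ψ u) 0 B := by
  have hu_eq : u = fun ω => Bᶜ.indicator (fun _ => 1) ω * u ω := by
    funext ω
    by_cases hω : ω ∈ B
    · simp [hu_zero hω]
    · simp [hω]
  have hψu := hψ u (Bᶜ.indicator fun _ => 1) hu (measurable_const.indicator hB.compl)
    (Set.indicator_nonneg fun _ _ => zero_le_one)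
  rw [← hu_eq] at hψu
  intro ω hω
  simpa [hω] using congrFun hψu ω

lemma eq_div_add_mul_of_eq_apply (hψ : IsCondPosHomogeneous m₀ m₁ ψ)
    (hψ_nonneg : ∀ f : Ω → ℝ, (∀ ω, 0 ≤ f ω) → ∀ ω, 0 ≤ ψ f ω)
    {a x s u x' : Ω → ℝ} (ha : Measurable[m₀] a) (hx : Measurable[m₀] x) (hs : Measurable[m₀] s)
    (hu : Measurable[m₁] u) (hs_pos : ∀ ω, 0 < s ω) (hu_nonneg : ∀ ω, 0 ≤ u ω)
    (hx'_eq : ∀ ω, x' ω = (a ω - x ω) / s ω * u ω) (hx'_nonneg : ∀ ω, 0 ≤ x' ω)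
    (hx_eq : x = ψ x') (ω : Ω) :
    x ω = ψ u ω / (s ω + ψ u ω) * a ω := by
  set g : Ω → ℝ := fun ω => (a ω - x ω) / s ω
  have hg : Measurable[m₀] g := (ha.sub hx).div hs
  have hx'_pos : x' = fun ω => max (g ω) 0 * u ω := funext fun ω => by
    rw [hx'_eq]
    exact mul_eq_max_zero_mul_of_mul_nonneg (hu_nonneg ω) (hx'_eq ω ▸ hx'_nonneg ω)
  have hx_pos : x = fun ω => max (g ω) 0 * ψ u ω := by
    rw [hx_eq, hx'_pos, hψ u _ hu (hg.max measurable_const) fun _ => le_max_right _ _]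
  have hu_zero : Set.EqOn u 0 {ω | g ω < 0} := fun ω (hω : g ω < 0) => by
    have hgu : 0 ≤ g ω * u ω := hx'_eq ω ▸ hx'_nonneg ω
    exact le_antisymm (nonpos_of_mul_nonneg_right hgu hω) (hu_nonneg ω)
  have hψu_zero := hψ.apply_eq_zero_of_eqOn_zero hu (measurableSet_lt hg measurable_const) hu_zero
  exact eq_div_add_mul_of_eq_max_zero_mul (hs_pos ω) (hψ_nonneg u hu_nonneg ω)
    (fun hω => hψu_zero hω) (congrFun hx_pos ω)

end IsCondPosHomogeneous

section Recursions

variable {Ω : Type*} {m : MeasurableSpace Ω} {ℱ : Filtration ℕ m} {K : ℕ} {S : ℕ → Ω → ℝ}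

lemma measurable_and_nonneg_of_backward_rec {Z : ℕ → Ω → ℝ} {ψ : ℕ → (Ω → ℝ) → Ω → ℝ}
    (hS : ∀ k, Measurable[ℱ k] (S k)) (hS_nonneg : ∀ k ω, 0 ≤ S k ω)
    (hψ_meas : ∀ k < K, ∀ f : Ω → ℝ, Measurable[ℱ (k + 1)] f → Measurable[ℱ k] (ψ k f))
    (hψ_nonneg : ∀ k < K, ∀ f : Ω → ℝ, (∀ ω, 0 ≤ f ω) → ∀ ω, 0 ≤ ψ k f ω)
    (hZK_meas : Measurable[ℱ K] (Z K)) (hZK_nonneg : ∀ ω, 0 ≤ Z K ω)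
    (hZ_rec : ∀ k < K, ∀ ω, Z k ω =
      ψ k (fun ω' => Z (k + 1) ω' * S (k + 1) ω') ω /
        (S k ω + ψ k (fun ω' => Z (k + 1) ω' * S (k + 1) ω') ω)) :
    ∀ k ≤ K, Measurable[ℱ k] (Z k) ∧ ∀ ω, 0 ≤ Z k ω := by
  intro k hk
  induction hk using Nat.decreasingInduction with
  | self => exact ⟨hZK_meas, hZK_nonneg⟩
  | of_succ k hk ih =>
    set c := ψ k (fun ω' => Z (k + 1) ω' * S (k + 1) ω')
    have hc_meas : Measurable[ℱ k] c := hψ_meas k hk _ (ih.1.mul (hS (k + 1)))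
    have hc_nonneg : ∀ ω, 0 ≤ c ω :=
      hψ_nonneg k hk _ fun ω => mul_nonneg (ih.2 ω) (hS_nonneg (k + 1) ω)
    rw [show Z k = fun ω => c ω / (S k ω + c ω) from funext (hZ_rec k hk)]
    exact ⟨hc_meas.div ((hS k).add hc_meas),
      fun ω => div_nonneg (hc_nonneg ω) (add_nonneg (hS_nonneg k ω) (hc_nonneg ω))⟩

lemma measurable_of_forward_rec {A X : ℕ → Ω → ℝ} (hS : ∀ k, Measurable[ℱ k] (S k))
    (hX : ∀ k, Measurable[ℱ k] (X k)) (hA0 : Measurable[ℱ 0] (A 0))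
    (hA_rec : ∀ k < K, ∀ ω, A (k + 1) ω = (A k ω - X k ω) * S (k + 1) ω / S k ω) :
    ∀ k ≤ K, Measurable[ℱ k] (A k) := by
  intro k hk
  induction k with
  | zero => exact hA0
  | succ k ih =>
    have hk' : k < K := hk
    have hle := ℱ.mono k.le_succ
    rw [show A (k + 1) = _ from funext (hA_rec k hk')]
    exact (((ih hk'.le).mono hle le_rfl).sub ((hX k).mono hle le_rfl) |>.mul (hS (k + 1))).div
      ((hS k).mono hle le_rfl)

end Recursions

theorem PHPP_uniqueness_general
    {Ω : Type*} {m : MeasurableSpace Ω} (K : ℕ) (ℱ : Filtration ℕ m)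
    (S A : ℕ → Ω → ℝ) (X Z : ℕ → Ω → ℝ)
    (hSadapted : ∀ k : ℕ, Measurable[ℱ k] (S k))
    (hSpos : ∀ k ω, 0 < S k ω)
    (ψ : ℕ → (Ω → ℝ) → (Ω → ℝ)) (ψK : Ω → ℝ)
    (hψmeas : ∀ k < K, ∀ f : Ω → ℝ, Measurable[ℱ (k + 1)] f → Measurable[ℱ k] (ψ k f))
    (hψpos : ∀ k < K, ∀ f : Ω → ℝ, (∀ ω, 0 ≤ f ω) → ∀ ω, 0 ≤ ψ k f ω)
    (hψhom : ∀ k < K, ∀ f g : Ω → ℝ, Measurable[ℱ (k + 1)] f → Measurable[ℱ k] g →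
      (∀ ω, 0 ≤ g ω) → ψ k (fun ω => g ω * f ω) = fun ω => g ω * ψ k f ω)
    (hψKmeas : Measurable[ℱ K] ψK) (hψK01 : ∀ ω, 0 ≤ ψK ω ∧ ψK ω ≤ 1)
    -- backward recursion for the relative rates
    (hZK : Z K = ψK)
    (hZrec : ∀ k < K, ∀ ω, Z k ω =
      ψ k (fun ω' => Z (k + 1) ω' * S (k + 1) ω') ω /
        (S k ω + ψ k (fun ω' => Z (k + 1) ω' * S (k + 1) ω') ω))
    -- X nonnegative adapted with the PHPP
    (hXadapted : ∀ k : ℕ, Measurable[ℱ k] (X k))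
    (hXnonneg : ∀ k ≤ K, ∀ ω, 0 ≤ X k ω)
    (hA0 : ∀ ω, A 0 ω = S 0 ω)
    (hArec : ∀ k < K, ∀ ω, A (k + 1) ω = (A k ω - X k ω) * S (k + 1) ω / S k ω)
    (hproj : ∀ k < K, X k = ψ k (X (k + 1)))
    (hfinal : ∀ ω, X K ω = ψK ω * A K ω) :
    ∀ k ≤ K, ∀ ω, X k ω = Z k ω * A k ω := by
  have hZ := measurable_and_nonneg_of_backward_rec hSadapted (fun k ω => (hSpos k ω).le) hψmeas
    hψpos (hZK ▸ hψKmeas) (hZK ▸ fun ω => (hψK01 ω).1) hZrec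
  have hA := measurable_of_forward_rec hSadapted hXadapted
    ((show A 0 = S 0 from funext hA0) ▸ hSadapted 0) hArec
  intro k hk
  induction hk using Nat.decreasingInduction with
  | self => intro ω; rw [hfinal, hZK]
  | of_succ k hk ih =>
    intro ω
    rw [hZrec k hk ω]
    refine IsCondPosHomogeneous.eq_div_add_mul_of_eq_apply (hψhom k hk) (hψpos k hk)
      (hA k hk.le) (hXadapted k) (hSadapted k) ((hZ (k + 1) hk).1.mul (hSadapted (k + 1)))
      (hSpos k) (fun ω => mul_nonneg ((hZ (k + 1) hk).2 ω) (hSpos (k + 1) ω).le) (fun ω => ?_)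
      (hXnonneg (k + 1) hk) (hproj k hk) ω
    rw [ih, hArec k hk, Pi.mul_apply]
    ring

/-- uniqueness: any nonnegative adapted process with the PHPP `ψ`
satisfies `X_k = Z_k·A_k` with `Z` given by the backward recursion. -/
theorem PHPP_uniqueness
    {Ω : Type*} {m : MeasurableSpace Ω} (K : ℕ) (ℱ : Filtration ℕ m)
    (S A : ℕ → Ω → ℝ) (X Z : ℕ → Ω → ℝ)
    (hSadapted : ∀ k : ℕ, Measurable[ℱ k] (S k))
    (hSpos : ∀ k ω, 0 < S k ω)
    (ψ : ℕ → (Ω → ℝ) → (Ω → ℝ)) (ψK : Ω → ℝ)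
    (hψmeas : ∀ k < K, ∀ f : Ω → ℝ, Measurable[ℱ (k + 1)] f → Measurable[ℱ k] (ψ k f))
    (hψpos : ∀ k < K, ∀ f : Ω → ℝ, (∀ ω, 0 ≤ f ω) → ∀ ω, 0 ≤ ψ k f ω)
    (hψneg : ∀ k < K, ∀ f : Ω → ℝ, (∀ ω, f ω ≤ 0) → ∀ ω, ψ k f ω ≤ 0)
    (hψhom : ∀ k < K, ∀ f g : Ω → ℝ, Measurable[ℱ (k + 1)] f → Measurable[ℱ k] g →
      (∀ ω, 0 ≤ g ω) → ψ k (fun ω => g ω * f ω) = fun ω => g ω * ψ k f ω)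
    (hψKmeas : Measurable[ℱ K] ψK) (hψK01 : ∀ ω, 0 ≤ ψK ω ∧ ψK ω ≤ 1)
    -- backward recursion for the relative rates
    (hZK : Z K = ψK)
    (hZrec : ∀ k < K, ∀ ω, Z k ω =
      ψ k (fun ω' => Z (k + 1) ω' * S (k + 1) ω') ω /
        (S k ω + ψ k (fun ω' => Z (k + 1) ω' * S (k + 1) ω') ω))
    -- X nonnegative adapted with the PHPP
    (hXadapted : ∀ k : ℕ, Measurable[ℱ k] (X k))
    (hXnonneg : ∀ k ≤ K, ∀ ω, 0 ≤ X k ω)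
    (hA0 : ∀ ω, A 0 ω = S 0 ω)
    (hArec : ∀ k < K, ∀ ω, A (k + 1) ω = (A k ω - X k ω) * S (k + 1) ω / S k ω)
    (hproj : ∀ k < K, X k = ψ k (X (k + 1)))
    (hfinal : ∀ ω, X K ω = ψK ω * A K ω) :
    ∀ k ≤ K, ∀ ω, X k ω = Z k ω * A k ω :=
  PHPP_uniqueness_general K ℱ S A X Z hSadapted hSpos ψ ψK hψmeas hψpos hψhom hψKmeas hψK01 hZK
    hZrec hXadapted hXnonneg hA0 hArec hproj hfinal
end

section
/- Under the assumptions of the previous statement (ψ_k(S_{k+1}/S_k) = a_k, ψ_K ≡ a_K), the absolute consumption rates satisfy X_k = [(∏_{j=k}^{K} a_j)/(1 + Σ_{j=0}^{K-1} ∏_{i=j}^{K} a_i)]·S_k for k = 0,...,K. -/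
/-!
With `b k = ∏_{i=k}^K a_i` and `D k = 1 + ∑_{j=k}^{K-1} b j` one has `b k = a k * b (k+1)` and
`D k = b k + D (k+1)`. Backward induction shows that the relative rate `Z k` is the constant
`b k / D k`: positive homogeneity of `ψ_k` pulls the `ℱ k`-measurable factor `Z (k+1) S k` out of
`ψ_k (Z (k+1) S (k+1))`, leaving `ψ_k (S (k+1) / S k) = a k`. Forward induction then gives the
wealth `A k = D k / D 0 * S k`, so `X k = Z k * A k = b k / D 0 * S k`.
-/

open MeasureTheory Finset

namespace DeterministicRates

def tailProd (a : ℕ → ℝ) (K k : ℕ) : ℝ := ∏ i ∈ Icc k K, a i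

def tailDenom (a : ℕ → ℝ) (K k : ℕ) : ℝ := 1 + ∑ j ∈ Ico k K, tailProd a K j

section Tail

variable {a : ℕ → ℝ} {K : ℕ}

lemma tailProd_nonneg (ha : ∀ k ≤ K, 0 ≤ a k) (k : ℕ) : 0 ≤ tailProd a K k :=
  prod_nonneg fun i hi => ha i (mem_Icc.mp hi).2

lemma tailDenom_pos (ha : ∀ k ≤ K, 0 ≤ a k) (k : ℕ) : 0 < tailDenom a K k :=
  add_pos_of_pos_of_nonneg one_pos (sum_nonneg fun j _ => tailProd_nonneg ha j)

@[simp] lemma tailProd_self : tailProd a K K = a K := by simp [tailProd]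

@[simp] lemma tailDenom_self : tailDenom a K K = 1 := by simp [tailDenom]

lemma tailProd_eq_mul_succ {k : ℕ} (hk : k < K) :
    tailProd a K k = a k * tailProd a K (k + 1) := by
  rw [tailProd, ← Ioc_insert_left hk.le, prod_insert (by simp), ← Icc_add_one_left_eq_Ioc,
    tailProd]

lemma tailDenom_eq_add_succ {k : ℕ} (hk : k < K) :
    tailDenom a K k = tailProd a K k + tailDenom a K (k + 1) := by
  rw [tailDenom, sum_eq_sum_Ico_succ_bot hk, tailDenom]
  ring

end Tail

lemma apply_const_mul_eq {Ω : Type*} {m₀ m₁ : MeasurableSpace Ω} (hm : m₀ ≤ m₁)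
    (φ : (Ω → ℝ) → Ω → ℝ)
    (hφ : ∀ f g : Ω → ℝ, Measurable[m₁] f → Measurable[m₀] g → (∀ ω, 0 ≤ g ω) →
      φ (fun ω => g ω * f ω) = fun ω => g ω * φ f ω)
    {s t : Ω → ℝ} (hs : Measurable[m₀] s) (ht : Measurable[m₁] t) (hs_pos : ∀ ω, 0 < s ω)
    {α : ℝ} (hα : φ (fun ω => t ω / s ω) = fun _ => α) {c : ℝ} (hc : 0 ≤ c) :
    φ (fun ω => c * t ω) = fun ω => c * α * s ω := by
  have hsplit : (fun ω => c * t ω) = fun ω => c * s ω * (t ω / s ω) := by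
    funext ω
    field_simp [(hs_pos ω).ne']
  rw [hsplit, hφ (fun ω => t ω / s ω) (fun ω => c * s ω) (ht.div (hs.mono hm le_rfl))
    (measurable_const.mul hs) fun ω => mul_nonneg hc (hs_pos ω).le, hα]
  funext ω
  ring

lemma relativeRate_step_eq {b D α s : ℝ} (hD : 0 < D) (hs : 0 < s) :
    b / D * α * s / (s + b / D * α * s) = α * b / (α * b + D) := by
  field_simp
  ring

variable {Ω : Type*} {m : MeasurableSpace Ω} {K : ℕ} {ℱ : Filtration ℕ m} {S : ℕ → Ω → ℝ}
  {a : ℕ → ℝ}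

lemma relativeRate_eq {Z : ℕ → Ω → ℝ} {ψ : ℕ → (Ω → ℝ) → (Ω → ℝ)}
    (hSadapted : ∀ k : ℕ, Measurable[ℱ k] (S k)) (hSpos : ∀ k ω, 0 < S k ω)
    (hψhom : ∀ k < K, ∀ f g : Ω → ℝ, Measurable[ℱ (k + 1)] f → Measurable[ℱ k] g →
      (∀ ω, 0 ≤ g ω) → ψ k (fun ω => g ω * f ω) = fun ω => g ω * ψ k f ω)
    (ha : ∀ k ≤ K, 0 ≤ a k)
    (hψS : ∀ k < K, ψ k (fun ω => S (k + 1) ω / S k ω) = fun _ => a k)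
    (hZK : Z K = fun _ => a K)
    (hZrec : ∀ k < K, ∀ ω, Z k ω =
      ψ k (fun ω' => Z (k + 1) ω' * S (k + 1) ω') ω /
        (S k ω + ψ k (fun ω' => Z (k + 1) ω' * S (k + 1) ω') ω)) :
    ∀ k ≤ K, Z k = fun _ => tailProd a K k / tailDenom a K k := by
  intro k hk
  induction hk using Nat.decreasingInduction with
  | self => simp [hZK]
  | of_succ k hk ih =>
    have hc := div_nonneg (tailProd_nonneg ha (k + 1)) (tailDenom_pos ha (k + 1)).le
    have hψZ : ψ k (fun ω => Z (k + 1) ω * S (k + 1) ω) =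
        fun ω => tailProd a K (k + 1) / tailDenom a K (k + 1) * a k * S k ω := by
      rw [ih]
      exact apply_const_mul_eq (ℱ.mono k.le_succ) (ψ k) (hψhom k hk) (hSadapted k)
        (hSadapted (k + 1)) (hSpos k) (hψS k hk) hc
    funext ω
    rw [hZrec k hk ω, hψZ, relativeRate_step_eq (tailDenom_pos ha _) (hSpos k ω),
      tailDenom_eq_add_succ hk, tailProd_eq_mul_succ hk]

lemma wealth_eq {A X : ℕ → Ω → ℝ} (hSpos : ∀ k ω, 0 < S k ω) (ha : ∀ k ≤ K, 0 ≤ a k)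
    (hX : ∀ k ≤ K, ∀ ω, X k ω = tailProd a K k / tailDenom a K k * A k ω)
    (hA0 : ∀ ω, A 0 ω = S 0 ω)
    (hArec : ∀ k < K, ∀ ω, A (k + 1) ω = (A k ω - X k ω) * S (k + 1) ω / S k ω) :
    ∀ k ≤ K, ∀ ω, A k ω = tailDenom a K k / tailDenom a K 0 * S k ω := by
  intro k hk ω
  induction k with
  | zero => rw [hA0, div_self (tailDenom_pos ha 0).ne', one_mul]
  | succ k ih =>
    have hk' : k < K := hk
    have hDk := (tailDenom_pos ha k).ne'
    have hD0 := (tailDenom_pos ha 0).ne'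
    have hSk := (hSpos k ω).ne'
    have hDsucc : tailDenom a K (k + 1) = tailDenom a K k - tailProd a K k := by
      rw [tailDenom_eq_add_succ hk']
      ring
    rw [hArec k hk' ω, hX k hk'.le ω, ih hk'.le, hDsucc]
    field_simp

end DeterministicRates

open DeterministicRates in
theorem deterministic_absolute_rates_general
    {Ω : Type*} {m : MeasurableSpace Ω} (K : ℕ) (ℱ : Filtration ℕ m)
    (S A : ℕ → Ω → ℝ) (X Z : ℕ → Ω → ℝ) (a : ℕ → ℝ)
    (hSadapted : ∀ k : ℕ, Measurable[ℱ k] (S k))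
    (hSpos : ∀ k ω, 0 < S k ω)
    (ψ : ℕ → (Ω → ℝ) → (Ω → ℝ)) (ψK : Ω → ℝ)
    (hψhom : ∀ k < K, ∀ f g : Ω → ℝ, Measurable[ℱ (k + 1)] f → Measurable[ℱ k] g →
      (∀ ω, 0 ≤ g ω) → ψ k (fun ω => g ω * f ω) = fun ω => g ω * ψ k f ω)
    (ha : ∀ k ≤ K, 0 ≤ a k)
    (hψS : ∀ k < K, ψ k (fun ω => S (k + 1) ω / S k ω) = fun _ => a k)
    (hψKa : ψK = fun _ => a K)
    -- Z given by the backward recursion of Theorem 1, X and A by the forward recursion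
    (hZK : Z K = ψK)
    (hZrec : ∀ k < K, ∀ ω, Z k ω =
      ψ k (fun ω' => Z (k + 1) ω' * S (k + 1) ω') ω /
        (S k ω + ψ k (fun ω' => Z (k + 1) ω' * S (k + 1) ω') ω))
    (hX : ∀ k ≤ K, ∀ ω, X k ω = Z k ω * A k ω)
    (hA0 : ∀ ω, A 0 ω = S 0 ω)
    (hArec : ∀ k < K, ∀ ω, A (k + 1) ω = (A k ω - X k ω) * S (k + 1) ω / S k ω) :
    ∀ k ≤ K, ∀ ω, X k ω =
      (∏ j ∈ Icc k K, a j) / (1 + ∑ j ∈ Ico 0 K, ∏ i ∈ Icc j K, a i) * S k ω := by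
  have hZ := relativeRate_eq hSadapted hSpos hψhom ha hψS (hZK.trans hψKa) hZrec
  have hXZ : ∀ k ≤ K, ∀ ω, X k ω = tailProd a K k / tailDenom a K k * A k ω := fun k hk ω => by
    rw [hX k hk ω, hZ k hk]
  have hA := wealth_eq hSpos ha hXZ hA0 hArec
  intro k hk ω
  change X k ω = tailProd a K k / tailDenom a K 0 * S k ω
  rw [hXZ k hk ω, hA k hk ω]
  field_simp [(tailDenom_pos ha k).ne', (tailDenom_pos ha 0).ne']

/-- if `ψ_k(S_{k+1}/S_k) ≡ a_k` and `ψ_K ≡ a_K`, the absolute consumption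
rates satisfy `X_k = (∏_{j=k}^K a_j)/(1 + ∑_{j=0}^{K-1} ∏_{i=j}^K a_i) · S_k`. -/
theorem deterministic_absolute_rates
    {Ω : Type*} {m : MeasurableSpace Ω} (K : ℕ) (ℱ : Filtration ℕ m)
    (S A : ℕ → Ω → ℝ) (X Z : ℕ → Ω → ℝ) (a : ℕ → ℝ)
    (hSadapted : ∀ k : ℕ, Measurable[ℱ k] (S k))
    (hSpos : ∀ k ω, 0 < S k ω)
    (ψ : ℕ → (Ω → ℝ) → (Ω → ℝ)) (ψK : Ω → ℝ)
    (hψmeas : ∀ k < K, ∀ f : Ω → ℝ, Measurable[ℱ (k + 1)] f → Measurable[ℱ k] (ψ k f))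
    (hψpos : ∀ k < K, ∀ f : Ω → ℝ, (∀ ω, 0 ≤ f ω) → ∀ ω, 0 ≤ ψ k f ω)
    (hψneg : ∀ k < K, ∀ f : Ω → ℝ, (∀ ω, f ω ≤ 0) → ∀ ω, ψ k f ω ≤ 0)
    (hψhom : ∀ k < K, ∀ f g : Ω → ℝ, Measurable[ℱ (k + 1)] f → Measurable[ℱ k] g →
      (∀ ω, 0 ≤ g ω) → ψ k (fun ω => g ω * f ω) = fun ω => g ω * ψ k f ω)
    (hψKmeas : Measurable[ℱ K] ψK) (hψK01 : ∀ ω, 0 ≤ ψK ω ∧ ψK ω ≤ 1)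
    (ha : ∀ k ≤ K, 0 ≤ a k)
    (hψS : ∀ k < K, ψ k (fun ω => S (k + 1) ω / S k ω) = fun _ => a k)
    (hψKa : ψK = fun _ => a K)
    -- Z given by the backward recursion of Theorem 1, X and A by the forward recursion
    (hZK : Z K = ψK)
    (hZrec : ∀ k < K, ∀ ω, Z k ω =
      ψ k (fun ω' => Z (k + 1) ω' * S (k + 1) ω') ω /
        (S k ω + ψ k (fun ω' => Z (k + 1) ω' * S (k + 1) ω') ω))
    (hX : ∀ k ≤ K, ∀ ω, X k ω = Z k ω * A k ω)
    (hA0 : ∀ ω, A 0 ω = S 0 ω)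
    (hArec : ∀ k < K, ∀ ω, A (k + 1) ω = (A k ω - X k ω) * S (k + 1) ω / S k ω) :
    ∀ k ≤ K, ∀ ω, X k ω =
      (∏ j ∈ Icc k K, a j) / (1 + ∑ j ∈ Ico 0 K, ∏ i ∈ Icc j K, a i) * S k ω :=
  deterministic_absolute_rates_general K ℱ S A X Z a hSadapted hSpos ψ ψK hψhom ha hψS hψKa hZK
    hZrec hX hA0 hArec
end

section
/- Let X(S,ψ) be a regular consumption process with PHPP ψ whose relative rates are deterministic: Z_k ≡ z_k with z_k ∈ [0,1) for k < K and z_K ∈ [0,1]. Let k_0 be the maximal k with z_k = 0. Then ψ_k(S_{k+1}/S_k) ≡ z_k/((1-z_k)·z_{k+1}) for k = k_0,...,K-1, and ψ_K ≡ z_K. -/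
open MeasureTheory

/-!
Fix `k₀ ≤ k < K`. Maximality of `k₀` gives `z_{k+1} > 0`, so homogeneity of `ψ_k` with the
`ℱ_k`-measurable factor `z_{k+1} S_k` yields `ψ_k(Z_{k+1} S_{k+1}) = z_{k+1} S_k ψ_k(S_{k+1}/S_k)`.
Solving the recursion `z_k = f / (S_k + f)` for `f = ψ_k(Z_{k+1} S_{k+1})` gives
`f = z_k S_k / (1 - z_k)`, and dividing by `z_{k+1} S_k` gives the claim.
-/

lemma mul_one_sub_eq_of_eq_div_add {s f z : ℝ} (hsf : s + f ≠ 0) (h : z = f / (s + f)) :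
    f * (1 - z) = z * s := by
  rw [h]
  field_simp
  ring

lemma eq_div_of_eq_div_add_of_eq_mul {s f c p z : ℝ} (hs : 0 < s) (hf : 0 ≤ f) (hc : c ≠ 0)
    (hz : z < 1) (hrate : z = f / (s + f)) (hfp : f = c * s * p) :
    p = z / ((1 - z) * c) := by
  have hsolve := mul_one_sub_eq_of_eq_div_add (by positivity) hrate
  rw [eq_div_iff (mul_ne_zero (by linarith) hc)]
  apply mul_right_cancel₀ hs.ne'
  linear_combination (1 - z) * hfp.symm + hsolve

lemma map_const_mul_eq_mul_map_div {Ω : Type*} {m₀ m₁ : MeasurableSpace Ω} (hm : m₀ ≤ m₁)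
    (ψ : (Ω → ℝ) → (Ω → ℝ))
    (hψhom : ∀ f g : Ω → ℝ, Measurable[m₁] f → Measurable[m₀] g →
      (∀ ω, 0 ≤ g ω) → ψ (fun ω => g ω * f ω) = fun ω => g ω * ψ f ω)
    {s s' : Ω → ℝ} (hs : Measurable[m₀] s) (hs' : Measurable[m₁] s') (hspos : ∀ ω, 0 < s ω)
    {c : ℝ} (hc : 0 ≤ c) :
    ψ (fun ω => c * s' ω) = fun ω => c * s ω * ψ (fun ω => s' ω / s ω) ω := by
  have hcs : (fun ω => c * s' ω) = fun ω => c * s ω * (s' ω / s ω) := by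
    funext ω
    field_simp [(hspos ω).ne']
  rw [hcs]
  exact hψhom _ _ (hs'.div (hs.mono hm le_rfl)) (measurable_const.mul hs)
    fun ω => mul_nonneg hc (hspos ω).le

theorem PHPP_from_deterministic_rates_general
    {Ω : Type*} {m : MeasurableSpace Ω} (K : ℕ) (ℱ : Filtration ℕ m)
    (S : ℕ → Ω → ℝ) (Z : ℕ → Ω → ℝ) (z : ℕ → ℝ) (k₀ : ℕ)
    (hSadapted : ∀ k : ℕ, Measurable[ℱ k] (S k))
    (hSpos : ∀ k ω, 0 < S k ω)
    (ψ : ℕ → (Ω → ℝ) → (Ω → ℝ)) (ψK : Ω → ℝ)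
    (hψpos : ∀ k < K, ∀ f : Ω → ℝ, (∀ ω, 0 ≤ f ω) → ∀ ω, 0 ≤ ψ k f ω)
    (hψhom : ∀ k < K, ∀ f g : Ω → ℝ, Measurable[ℱ (k + 1)] f → Measurable[ℱ k] g →
      (∀ ω, 0 ≤ g ω) → ψ k (fun ω => g ω * f ω) = fun ω => g ω * ψ k f ω)
    -- Z given by the backward recursion of Theorem 1
    (hZK : Z K = ψK)
    (hZrec : ∀ k < K, ∀ ω, Z k ω =
      ψ k (fun ω' => Z (k + 1) ω' * S (k + 1) ω') ω /
        (S k ω + ψ k (fun ω' => Z (k + 1) ω' * S (k + 1) ω') ω))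
    -- the rates are deterministic constants z_k
    (hZdet : ∀ k ≤ K, Z k = fun _ => z k)
    (hz : ∀ k < K, 0 ≤ z k ∧ z k < 1) (hzK : 0 ≤ z K ∧ z K ≤ 1)
    -- k₀ is the maximal index with z_{k₀} = 0
    (hk₀max : ∀ j ≤ K, k₀ < j → z j ≠ 0) :
    (∀ k, k₀ ≤ k → k < K →
      ψ k (fun ω => S (k + 1) ω / S k ω) = fun _ => z k / ((1 - z k) * z (k + 1))) ∧
    ψK = fun _ => z K := by
  refine ⟨fun k hk₀k hkK => ?_, hZK ▸ hZdet K le_rfl⟩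
  have hz₁ : z (k + 1) ≠ 0 := hk₀max (k + 1) hkK (Nat.lt_succ_of_le hk₀k)
  have hz₁nonneg : 0 ≤ z (k + 1) := by
    rcases Nat.succ_le_of_lt hkK |>.lt_or_eq with hlt | heq
    · exact (hz _ hlt).1
    · rw [show k + 1 = K from heq]; exact hzK.1
  have hψprod := map_const_mul_eq_mul_map_div (ℱ.mono k.le_succ) (ψ k) (hψhom k hkK)
    (hSadapted k) (hSadapted (k + 1)) (hSpos k) hz₁nonneg
  funext ω
  have hrec := hZrec k hkK ω
  simp only [hZdet (k + 1) hkK, hZdet k hkK.le] at hrec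
  refine eq_div_of_eq_div_add_of_eq_mul (hSpos k ω) ?_ hz₁ (hz k hkK).2 hrec
    (congrFun hψprod ω)
  exact hψpos k hkK _ (fun ω' => mul_nonneg hz₁nonneg (hSpos _ ω').le) ω

/-- if the relative rates of `X(S,ψ)` are deterministic constants `z_k`
(`z_k ∈ [0,1)` for `k < K`, `z_K ∈ [0,1]`) and `k₀` is the maximal `k` with `z_k = 0`,
then `ψ_k(S_{k+1}/S_k) ≡ z_k/((1-z_k)·z_{k+1})` for `k₀ ≤ k < K`, and `ψ_K ≡ z_K`. -/
theorem PHPP_from_deterministic_rates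
    {Ω : Type*} {m : MeasurableSpace Ω} (K : ℕ) (ℱ : Filtration ℕ m)
    (S : ℕ → Ω → ℝ) (Z : ℕ → Ω → ℝ) (z : ℕ → ℝ) (k₀ : ℕ)
    (hSadapted : ∀ k : ℕ, Measurable[ℱ k] (S k))
    (hSpos : ∀ k ω, 0 < S k ω)
    (ψ : ℕ → (Ω → ℝ) → (Ω → ℝ)) (ψK : Ω → ℝ)
    (hψmeas : ∀ k < K, ∀ f : Ω → ℝ, Measurable[ℱ (k + 1)] f → Measurable[ℱ k] (ψ k f))
    (hψpos : ∀ k < K, ∀ f : Ω → ℝ, (∀ ω, 0 ≤ f ω) → ∀ ω, 0 ≤ ψ k f ω)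
    (hψneg : ∀ k < K, ∀ f : Ω → ℝ, (∀ ω, f ω ≤ 0) → ∀ ω, ψ k f ω ≤ 0)
    (hψhom : ∀ k < K, ∀ f g : Ω → ℝ, Measurable[ℱ (k + 1)] f → Measurable[ℱ k] g →
      (∀ ω, 0 ≤ g ω) → ψ k (fun ω => g ω * f ω) = fun ω => g ω * ψ k f ω)
    (hψKmeas : Measurable[ℱ K] ψK) (hψK01 : ∀ ω, 0 ≤ ψK ω ∧ ψK ω ≤ 1)
    -- Z given by the backward recursion of Theorem 1
    (hZK : Z K = ψK)
    (hZrec : ∀ k < K, ∀ ω, Z k ω =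
      ψ k (fun ω' => Z (k + 1) ω' * S (k + 1) ω') ω /
        (S k ω + ψ k (fun ω' => Z (k + 1) ω' * S (k + 1) ω') ω))
    -- the rates are deterministic constants z_k
    (hZdet : ∀ k ≤ K, Z k = fun _ => z k)
    (hz : ∀ k < K, 0 ≤ z k ∧ z k < 1) (hzK : 0 ≤ z K ∧ z K ≤ 1)
    -- k₀ is the maximal index with z_{k₀} = 0
    (hk₀ : k₀ ≤ K) (hzk₀ : z k₀ = 0) (hk₀max : ∀ j ≤ K, k₀ < j → z j ≠ 0) :
    (∀ k, k₀ ≤ k → k < K →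
      ψ k (fun ω => S (k + 1) ω / S k ω) = fun _ => z k / ((1 - z k) * z (k + 1))) ∧
    ψK = fun _ => z K :=
  PHPP_from_deterministic_rates_general K ℱ S Z z k₀ hSadapted hSpos ψ ψK hψpos hψhom hZK hZrec
    hZdet hz hzK hk₀max
end
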